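/- arXiv:1803.00862 — 4 statements merged into one kernel-verified Lean document; each statement's English description precedes it below -/
import Mathlib

section
/- A vector z ∈ ℝ^(2N-1) (identified with the complex sequence z_ℂ) belongs to the dual cone C* of the cone C of positive-semidefinite Hermitian Toeplitz matrices if and only if its trigonometric polynomial Z(ω) = (z_ℂ)_0 + 2 Σ_{k=1}^{N-1} Re((z_ℂ)_k e^{-jωk}) is nonnegative for all ω ∈ [0, 2π). -/
open Complex Matrix ComplexOrder Real

noncomputable section


/-- Hermitian Toeplitz matrix with first row `(2u₀, u₁ + j u_N, …, u_{N-1} + j u_{2N-2})`. -/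
def Tmat (N : ℕ) (u : Fin (2*N-1) → ℝ) : Matrix (Fin N) (Fin N) ℂ :=
  fun n m =>
    let g : ℕ → ℝ := fun k => if h : k < 2*N-1 then u ⟨k, h⟩ else 0
    let r : ℕ → ℂ := fun k =>
      if k = 0 then ((2 * g 0 : ℝ) : ℂ) else ((g k : ℝ) : ℂ) + Complex.I * ((g (N-1+k) : ℝ) : ℂ)
    if (n : ℕ) ≤ (m : ℕ) then r ((m : ℕ) - (n : ℕ)) else star (r ((n : ℕ) - (m : ℕ)))

/-- Identification of `z ∈ ℝ^(2N-1)` with the complex sequence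
`z_ℂ = (z₀, z₁ + j z_N, …, z_{N-1} + j z_{2N-2})`. -/
def toC (N : ℕ) (z : Fin (2*N-1) → ℝ) : ℕ → ℂ := fun k =>
  let g : ℕ → ℝ := fun k => if h : k < 2*N-1 then z ⟨k, h⟩ else 0
  if k = 0 then ((g 0 : ℝ) : ℂ) else ((g k : ℝ) : ℂ) + Complex.I * ((g (N-1+k) : ℝ) : ℂ)

/-- The trigonometric polynomial `Z(ω) = (z_ℂ)₀ + 2 Σ_{k=1}^{N-1} Re((z_ℂ)_k e^{-jωk})`. -/
def trigPoly (N : ℕ) (z : Fin (2*N-1) → ℝ) (ω : ℝ) : ℝ :=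
  (toC N z 0).re +
    2 * ∑ k ∈ Finset.Ico 1 N, (toC N z k * Complex.exp (-Complex.I * ω * k)).re

/-!
Pairing `z` with `u` is, up to a factor `2`, the pairing of the diagonals of `T(u)` with the
coefficients of the polynomial `P_z = X^(N-1) Z`. If `Z ≥ 0`, the Fejér–Riesz theorem writes
`P_z = p p*`, and then `2 zᵀu = aᴴ T(u) a` for the coefficient vector `a` of `p`, which is
nonnegative when `T(u) ⪰ 0`. Conversely, for `v = (e^{jωk})_k` the rank-one matrix `v vᴴ` is a
`T(u_ω)` with `zᵀu_ω = Z(ω)/2`.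

Fejér–Riesz is proved by induction on the degree: since `Z` is real, `P_z` is self-reciprocal, so
its roots come in pairs `α, 1/ᾱ` and one may divide by `(X - α)(X - α)*`; a root `α` on the unit
circle is double, because `Z` cannot change sign there.
-/

open Polynomial ComplexConjugate Set

/-- `Xⁿ · p̄(1/X)`, the `p*` of the Fejér–Riesz factorization `P = p p*` (for `deg p ≤ n`). -/
def conjReflect (n : ℕ) (p : ℂ[X]) : ℂ[X] := (p.map (starRingEnd ℂ)).reflect n

lemma coeff_conjReflect (n : ℕ) (p : ℂ[X]) (i : ℕ) :
    (conjReflect n p).coeff i = conj (p.coeff (revAt n i)) := by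
  rw [conjReflect, coeff_reflect, coeff_map]

lemma natDegree_conjReflect_le {n : ℕ} {p : ℂ[X]} (hp : p.natDegree ≤ n) :
    (conjReflect n p).natDegree ≤ n :=
  natDegree_reflect_le.trans (max_le le_rfl (natDegree_map_le.trans hp))

lemma conjReflect_mul {m n : ℕ} {p q : ℂ[X]} (hp : p.natDegree ≤ m) (hq : q.natDegree ≤ n) :
    conjReflect (m + n) (p * q) = conjReflect m p * conjReflect n q := by
  rw [conjReflect, Polynomial.map_mul,
    reflect_mul _ _ (natDegree_map_le.trans hp) (natDegree_map_le.trans hq)]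
  rfl

lemma eval_conjReflect {n : ℕ} {p : ℂ[X]} (hp : p.natDegree ≤ n) {w : ℂ} (hw : w ≠ 0) :
    (conjReflect n p).eval w = w ^ n * conj (p.eval (conj w)⁻¹) := by
  let := invertibleOfNonzero (inv_ne_zero hw)
  have h := eval₂_reflect_mul_pow (RingHom.id ℂ) w⁻¹ n (p.map (starRingEnd ℂ))
    (natDegree_map_le.trans hp)
  have h' : eval₂ (starRingEnd ℂ) w⁻¹ p = conj (p.eval (conj w)⁻¹) := by
    rw [eval, hom_eval₂, RingHom.comp_id, map_inv₀, Complex.conj_conj]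
  rw [invOf_eq_inv, inv_inv, eval₂_map, RingHom.id_comp, h'] at h
  rw [conjReflect, eval, ← h, mul_comm, mul_assoc, ← mul_pow, inv_mul_cancel₀ hw, one_pow,
    mul_one]

lemma eval_conjReflect_of_norm_eq_one {n : ℕ} {p : ℂ[X]} (hp : p.natDegree ≤ n) {w : ℂ}
    (hw : ‖w‖ = 1) : (conjReflect n p).eval w = w ^ n * conj (p.eval w) := by
  rw [eval_conjReflect hp (norm_ne_zero_iff.mp (hw ▸ one_ne_zero)), ← Complex.inv_eq_conj hw,
    inv_inv]

lemma conjReflect_one_X : conjReflect 1 X = 1 := by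
  simp [conjReflect]

lemma conjReflect_one_X_sub_C {α : ℂ} (hα : α ≠ 0) :
    conjReflect 1 (X - C α) = C (-conj α) * (X - C (conj α)⁻¹) := by
  have hα' : conj α ≠ 0 := by simpa using hα
  have h : conjReflect 1 (X - C α) = 1 - C (conj α) * X := by
    simp [conjReflect, reflect_sub, reflect_C]
  rw [h, mul_sub, ← C_mul, neg_mul, mul_inv_cancel₀ hα']
  simp only [C_neg, C_1]
  ring

lemma Continuous.le_of_forall_mem_Ioo {α : Type*} [TopologicalSpace α] [Preorder α]
    [ClosedIciTopology α] {f : ℝ → α} (hf : Continuous f) {a b : ℝ} (hab : a < b) {c : α}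
    (h : ∀ t ∈ Ioo a b, c ≤ f t) : c ≤ f a :=
  ge_of_tendsto (hf.continuousWithinAt (s := Ioi a)).tendsto
    (Filter.mem_of_superset (Ioo_mem_nhdsGT hab) h)

lemma eq_zero_of_forall_sin_mul_nonneg {g : ℝ → ℂ} (hg : Continuous g)
    (h : ∀ t, 0 ≤ (Real.sin t : ℂ) * g t) : g 0 = 0 := by
  have hsin : ∀ t ∈ Ioo 0 π, (0 : ℂ) < Real.sin t := fun t ht =>
    zero_lt_real.mpr (sin_pos_of_pos_of_lt_pi ht.1 ht.2)
  have hright : 0 ≤ g 0 := hg.le_of_forall_mem_Ioo pi_pos fun t ht =>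
    le_of_mul_le_mul_left (by rw [mul_zero]; exact h t) (hsin t ht)
  have hleft : 0 ≤ -g (-0) := ((hg.comp continuous_neg).neg).le_of_forall_mem_Ioo pi_pos
    fun t ht => le_of_mul_le_mul_left (by simpa [Real.sin_neg] using h (-t)) (hsin t ht)
  rw [neg_zero, neg_nonneg] at hleft
  exact le_antisymm hleft hright

lemma infinite_setOf_norm_eq_one : {w : ℂ | ‖w‖ = 1}.Infinite := by
  have hinj : InjOn (fun t : ℝ => cexp (t * I)) (Icc 0 π) := fun s hs t ht hst =>
    Real.injOn_cos hs ht (by simpa using congrArg re hst)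
  exact ((Icc_infinite pi_pos).image hinj).mono (by
    rintro _ ⟨t, -, rfl⟩
    exact norm_exp_ofReal_mul_I t)

lemma exp_two_mul_mul_I_sub_one (t : ℝ) :
    cexp (2 * t * I) - 1 = 2 * I * Real.sin t * cexp (t * I) := by
  have h : cexp (-t * I) * cexp (t * I) = 1 := by rw [← Complex.exp_add]; simp
  rw [ofReal_sin, Complex.sin, show (2 : ℂ) * t * I = t * I + t * I by ring, Complex.exp_add]
  linear_combination h + (cexp (t * I) * cexp (t * I) - cexp (-t * I) * cexp (t * I)) * I_sq

/-- In `ComplexOrder`, `0 ≤ z` means that `z` is real and nonnegative. -/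
def NonnegOnCircle (n : ℕ) (P : ℂ[X]) : Prop := ∀ w : ℂ, ‖w‖ = 1 → 0 ≤ P.eval w / w ^ n

lemma NonnegOnCircle.conjReflect_eq_self {n : ℕ} {P : ℂ[X]} (h : NonnegOnCircle n P)
    (hP : P.natDegree ≤ 2 * n) : conjReflect (2 * n) P = P := by
  refine eq_of_infinite_eval_eq _ _ (infinite_setOf_norm_eq_one.mono fun w hw => ?_)
  have hw0 : w ≠ 0 := norm_ne_zero_iff.mp (hw ▸ one_ne_zero)
  have hreal : conj (P.eval w / w ^ n) = P.eval w / w ^ n :=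
    Complex.conj_eq_iff_im.mpr (Complex.nonneg_iff.mp (h w hw)).2.symm
  rw [map_div₀, map_pow, ← Complex.inv_eq_conj hw,
    div_eq_div_iff (pow_ne_zero _ (inv_ne_zero hw0)) (pow_ne_zero _ hw0)] at hreal
  rw [mem_ofPred_eq, eval_conjReflect_of_norm_eq_one hP hw]
  calc w ^ (2 * n) * conj (P.eval w) = w ^ n * (conj (P.eval w) * w ^ n) := by ring
    _ = P.eval w := by rw [hreal, inv_pow]; field_simp

lemma NonnegOnCircle.of_forall_ne {n : ℕ} {P : ℂ[X]} {α : ℂ}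
    (h : ∀ w : ℂ, ‖w‖ = 1 → w ≠ α → 0 ≤ P.eval w / w ^ n) : NonnegOnCircle n P := by
  intro w hw
  by_cases hwα : w = α
  · subst hwα
    have hw0 : w ≠ 0 := norm_ne_zero_iff.mp (hw ▸ one_ne_zero)
    have hcont : Continuous fun t : ℝ => P.eval (w * cexp (t * I)) / (w * cexp (t * I)) ^ n :=
      (P.continuous.comp (by fun_prop)).div (by fun_prop)
        fun t => pow_ne_zero _ (mul_ne_zero hw0 (Complex.exp_ne_zero _))
    simpa using hcont.le_of_forall_mem_Ioo pi_pos fun t ht => h _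
      (by rw [norm_mul, hw, norm_exp_ofReal_mul_I, one_mul]) fun heq => by
        have h1 : cexp (t * I) = 1 := mul_left_cancel₀ hw0 (heq.trans (mul_one w).symm)
        have h2 := congrArg im h1
        rw [exp_ofReal_mul_I_im, one_im] at h2
        exact (sin_pos_of_pos_of_lt_pi ht.1 ht.2).ne' h2
  · exact h w hw hwα

lemma NonnegOnCircle.eval_eq_zero_of_X_sub_C_mul {m : ℕ} {G : ℂ[X]} {α : ℂ}
    (h : NonnegOnCircle m ((X - C α) * G)) (hα : ‖α‖ = 1) : G.eval α = 0 := by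
  have hα0 : α ≠ 0 := norm_ne_zero_iff.mp (hα ▸ one_ne_zero)
  set w : ℝ → ℂ := fun t => α * cexp (2 * t * I)
  have hw0 : ∀ t, w t ≠ 0 := fun t => mul_ne_zero hα0 (Complex.exp_ne_zero _)
  have hg : Continuous fun t : ℝ => 2 * I * α * cexp (t * I) * (G.eval (w t) / w t ^ m) :=
    (by fun_prop : Continuous fun t : ℝ => 2 * I * α * cexp (t * I)).mul
      ((G.continuous.comp (by fun_prop)).div (by fun_prop) fun t => pow_ne_zero _ (hw0 t))
  -- along `w t`, the nonnegative `P(w)/wᵐ` is `sin t` times a continuous function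
  have key := eq_zero_of_forall_sin_mul_nonneg hg fun t => by
    have hwt : ‖w t‖ = 1 := by
      rw [norm_mul, hα, ← ofReal_ofNat, ← ofReal_mul, norm_exp_ofReal_mul_I, one_mul]
    convert h (w t) hwt using 1
    rw [eval_mul, eval_sub, eval_X, eval_C, show w t - α = α * (cexp (2 * t * I) - 1) by ring,
      exp_two_mul_mul_I_sub_one]
    ring
  simpa [hα0, w] using key

lemma NonnegOnCircle.exists_eq_X_sub_C_mul_conjReflect_mul {m : ℕ} {P : ℂ[X]}
    (h : NonnegOnCircle m P) (hP : P.natDegree ≤ 2 * m) {α : ℂ} (hα0 : α ≠ 0)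
    (hroot : P.IsRoot α) : ∃ H, P = (X - C α) * conjReflect 1 (X - C α) * H := by
  obtain ⟨G, rfl⟩ := dvd_iff_isRoot.mpr hroot
  set β := (conj α)⁻¹ with hβ
  have hGβ : G.IsRoot β := by
    by_cases hβα : β = α
    · have hnorm := congrArg norm hβα
      rw [norm_inv, Complex.norm_conj] at hnorm
      have hα1 : ‖α‖ = 1 := by
        have := mul_inv_cancel₀ (norm_ne_zero_iff.mpr hα0)
        rw [hnorm] at this
        nlinarith [norm_nonneg α]
      rw [hβα]
      exact h.eval_eq_zero_of_X_sub_C_mul hα1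
    · have hβ0 : β ≠ 0 := inv_ne_zero (by simpa using hα0)
      have hPβ : ((X - C α) * G).eval β = 0 := by
        rw [← h.conjReflect_eq_self hP, eval_conjReflect hP hβ0, hβ, map_inv₀, Complex.conj_conj,
          inv_inv, hroot.eq_zero, map_zero, mul_zero]
      rw [eval_mul, eval_sub, eval_X, eval_C] at hPβ
      exact (mul_eq_zero.mp hPβ).resolve_left (sub_ne_zero.mpr hβα)
  obtain ⟨H, rfl⟩ := dvd_iff_isRoot.mpr hGβ
  have hc : -conj α ≠ 0 := by simpa using hα0
  refine ⟨C (-conj α)⁻¹ * H, ?_⟩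
  calc (X - C α) * ((X - C β) * H)
      = (X - C α) * (C (-conj α) * C (-conj α)⁻¹ * ((X - C β) * H)) := by
        rw [← C_mul, mul_inv_cancel₀ hc, C_1, one_mul]
    _ = _ := by rw [conjReflect_one_X_sub_C hα0]; ring

lemma NonnegOnCircle.of_X_sub_C_mul_conjReflect_mul {n : ℕ} {α : ℂ} {H : ℂ[X]}
    (h : NonnegOnCircle (n + 1) ((X - C α) * conjReflect 1 (X - C α) * H)) :
    NonnegOnCircle n H := by
  refine NonnegOnCircle.of_forall_ne (α := α) fun w hw hwα => ?_
  have hw0 : w ≠ 0 := norm_ne_zero_iff.mp (hw ▸ one_ne_zero)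
  have hpos : (0 : ℂ) < Complex.normSq (w - α) :=
    zero_lt_real.mpr (Complex.normSq_pos.mpr (sub_ne_zero.mpr hwα))
  refine le_of_mul_le_mul_left ?_ hpos
  rw [mul_zero]
  convert h w hw using 1
  rw [eval_mul, eval_mul, eval_conjReflect_of_norm_eq_one (natDegree_X_sub_C α).le hw,
    eval_sub, eval_X, eval_C, ← Complex.mul_conj, pow_one]
  field_simp
  ring

lemma NonnegOnCircle.exists_eq_mul_conjReflect_mul {n : ℕ} {P : ℂ[X]}
    (h : NonnegOnCircle (n + 1) P) (hP : P.natDegree ≤ 2 * (n + 1)) :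
    ∃ d Q : ℂ[X], d.natDegree ≤ 1 ∧ Q.natDegree ≤ 2 * n ∧ NonnegOnCircle n Q ∧
      P = d * conjReflect 1 d * Q := by
  have hself := h.conjReflect_eq_self hP
  by_cases h0 : P.coeff 0 = 0
  · obtain ⟨Q, rfl⟩ := X_dvd_iff.mpr h0
    have htop : Q.coeff (2 * n + 1) = 0 := by
      rw [← coeff_X_mul, ← hself, coeff_conjReflect, show 2 * n + 1 + 1 = 2 * (n + 1) by ring,
        revAt_le le_rfl, Nat.sub_self, h0, map_zero]
    refine ⟨X, Q, natDegree_X_le, ?_, fun w hw => ?_, by rw [conjReflect_one_X, mul_one]⟩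
    · rcases eq_or_ne Q 0 with rfl | hQ
      · simp
      exact natDegree_le_pred (by have := natDegree_X_mul hQ ▸ hP; omega) htop
    · have hw0 : w ≠ 0 := norm_ne_zero_iff.mp (hw ▸ one_ne_zero)
      simpa [pow_succ', mul_div_mul_left _ _ hw0] using h w hw
  · have htop : P.coeff (2 * (n + 1)) ≠ 0 := by
      rwa [← hself, coeff_conjReflect, revAt_le le_rfl, Nat.sub_self, _root_.map_ne_zero]
    have hdeg : P.natDegree = 2 * (n + 1) := le_antisymm hP (le_natDegree_of_ne_zero htop)
    obtain ⟨α, hα⟩ := Complex.exists_root (f := P) (natDegree_pos_iff_degree_pos.mp (by omega))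
    have hα0 : α ≠ 0 := by
      rintro rfl
      exact h0 (by rw [coeff_zero_eq_eval_zero]; exact hα)
    obtain ⟨H, hPH⟩ := h.exists_eq_X_sub_C_mul_conjReflect_mul hP hα0 hα
    have hD : ((X - C α) * conjReflect 1 (X - C α)).natDegree = 2 := by
      have hc : -conj α ≠ 0 := by simpa using hα0
      rw [conjReflect_one_X_sub_C hα0, natDegree_mul (X_sub_C_ne_zero _)
        (mul_ne_zero (C_ne_zero.mpr hc) (X_sub_C_ne_zero _)), natDegree_C_mul hc,
        natDegree_X_sub_C, natDegree_X_sub_C]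
    have hDH : (X - C α) * conjReflect 1 (X - C α) * H ≠ 0 :=
      hPH ▸ fun hP0 => h0 (by rw [hP0, coeff_zero])
    have hHdeg := natDegree_mul (left_ne_zero_of_mul hDH) (right_ne_zero_of_mul hDH)
    rw [← hPH, hD, hdeg] at hHdeg
    exact ⟨X - C α, H, (natDegree_X_sub_C α).le, by omega,
      NonnegOnCircle.of_X_sub_C_mul_conjReflect_mul (hPH ▸ h), hPH⟩

theorem NonnegOnCircle.exists_eq_mul_conjReflect {n : ℕ} {P : ℂ[X]} (h : NonnegOnCircle n P)
    (hP : P.natDegree ≤ 2 * n) : ∃ p : ℂ[X], p.natDegree ≤ n ∧ P = p * conjReflect n p := by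
  induction n generalizing P with
  | zero =>
    rw [eq_C_of_natDegree_le_zero hP] at h ⊢
    have hc : 0 ≤ P.coeff 0 := by simpa using h 1 (by simp)
    refine ⟨C (Real.sqrt (P.coeff 0).re : ℂ), by simp, ?_⟩
    rw [conjReflect, map_C, reflect_C, pow_zero, mul_one, ← C_mul, Complex.conj_ofReal,
      ← ofReal_mul, Real.mul_self_sqrt (Complex.nonneg_iff.mp hc).1,
      Complex.conj_eq_iff_re.mp (Complex.conj_eq_iff_im.mpr (Complex.nonneg_iff.mp hc).2.symm)]
  | succ n ih =>
    obtain ⟨d, Q, hd, hQdeg, hQ, rfl⟩ := h.exists_eq_mul_conjReflect_mul hP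
    obtain ⟨q, hq, rfl⟩ := ih hQ hQdeg
    refine ⟨d * q, natDegree_mul_le.trans (by omega), ?_⟩
    rw [add_comm n 1, conjReflect_mul hd hq]
    ring

def coeffPairing {R : Type*} [CommSemiring R] (f : ℕ → R) : R[X] →ₗ[R] R :=
  lsum fun s => f s • LinearMap.id

lemma coeffPairing_monomial {R : Type*} [CommSemiring R] (f : ℕ → R) (s : ℕ) (a : R) :
    coeffPairing f (monomial s a) = f s * a := by
  rw [coeffPairing, lsum_apply, sum_monomial_index _ _ (by simp)]
  rfl

lemma coeffPairing_mul {R : Type*} [CommSemiring R] {m n : ℕ} {P Q : R[X]}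
    (hP : P.natDegree ≤ m) (hQ : Q.natDegree ≤ n) (f : ℕ → R) :
    coeffPairing f (P * Q) = ∑ i ∈ Finset.range (m + 1), ∑ j ∈ Finset.range (n + 1),
      f (i + j) * (P.coeff i * Q.coeff j) := by
  conv_lhs => rw [as_sum_range' P (m + 1) (Nat.lt_succ_of_le hP),
    as_sum_range' Q (n + 1) (Nat.lt_succ_of_le hQ), Finset.sum_mul_sum]
  simp only [map_sum, monomial_mul_monomial, coeffPairing_monomial]

lemma coeffPairing_conjReflect_mul {n : ℕ} {p : ℂ[X]} (hp : p.natDegree ≤ n) (f : ℕ → ℂ) :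
    coeffPairing f (conjReflect n p * p) = ∑ i ∈ Finset.range (n + 1),
      ∑ j ∈ Finset.range (n + 1), conj (p.coeff i) * f (n - i + j) * p.coeff j := by
  rw [coeffPairing_mul (natDegree_conjReflect_le hp) hp, ← Finset.sum_range_reflect]
  refine Finset.sum_congr rfl fun i hi => Finset.sum_congr rfl fun j _ => ?_
  rw [Finset.mem_range] at hi
  rw [coeff_conjReflect, revAt_le (by omega), show n + 1 - 1 - i = n - i by omega,
    show n - (n - i) = i by omega]
  ring

lemma dotProduct_mulVec_eq_coeffPairing {n : ℕ} {A : Matrix (Fin (n + 1)) (Fin (n + 1)) ℂ}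
    {f : ℕ → ℂ} (hA : ∀ i j : Fin (n + 1), A i j = f (n - i + j)) {p : ℂ[X]}
    (hp : p.natDegree ≤ n) :
    star (fun i : Fin (n + 1) => p.coeff i) ⬝ᵥ A *ᵥ (fun i => p.coeff i) =
      coeffPairing f (conjReflect n p * p) := by
  simp only [coeffPairing_conjReflect_mul hp, dotProduct, mulVec, hA, Pi.star_apply,
    RCLike.star_def, Finset.mul_sum, ← mul_assoc, Finset.sum_range]

def toeplitzDiag (N : ℕ) (u : Fin (2 * N - 1) → ℝ) (s : ℕ) : ℂ :=
  if s < N - 1 then conj (toC N u (N - 1 - s))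
  else if s = N - 1 then 2 * toC N u 0 else toC N u (s - (N - 1))

lemma Tmat_apply (N : ℕ) (u : Fin (2 * N - 1) → ℝ) (i j : Fin N) :
    Tmat N u i j = toeplitzDiag N u (N - 1 - i + j) := by
  have hi := i.isLt
  have hT : Tmat N u i j = if (i : ℕ) ≤ j then
      (if (j : ℕ) - i = 0 then 2 * toC N u 0 else toC N u (j - i))
      else conj (if (i : ℕ) - j = 0 then 2 * toC N u 0 else toC N u (i - j)) := by
    simp only [Tmat, toC]
    split_ifs <;> first | omega | simp [RCLike.star_def]
  rw [hT, toeplitzDiag]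
  split_ifs <;> first | omega | rfl | (congr 1; omega) | (congr 2; omega)

lemma ofReal_re_toC_zero (N : ℕ) (z : Fin (2 * N - 1) → ℝ) :
    ((toC N z 0).re : ℂ) = toC N z 0 := by
  simp [toC]

lemma sum_mul_eq_toC (N : ℕ) (hN : 1 ≤ N) (z u : Fin (2 * N - 1) → ℝ) :
    ∑ i, z i * u i = (toC N z 0).re * (toC N u 0).re +
      ∑ k ∈ Finset.Ico 1 N, (toC N z k * conj (toC N u k)).re := by
  set g : (Fin (2 * N - 1) → ℝ) → ℕ → ℝ := fun v k => if h : k < 2 * N - 1 then v ⟨k, h⟩ else 0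
  have hsum : ∑ i, z i * u i = ∑ k ∈ Finset.range (N + (N - 1)), g z k * g u k := by
    rw [show N + (N - 1) = 2 * N - 1 by omega, ← Fin.sum_univ_eq_sum_range]
    simp [g]
  have h0 : ∀ v, (toC N v 0).re = g v 0 := fun v => by simp [toC, g]
  have hterm : ∀ k ∈ Finset.Ico 1 N, (toC N z k * conj (toC N u k)).re =
      g z k * g u k + g z (N - 1 + k) * g u (N - 1 + k) := by
    intro k hk
    rw [Finset.mem_Ico] at hk
    simp only [toC, if_neg (by omega : k ≠ 0)]
    simp [g]
  have hshift : ∑ k ∈ Finset.Ico 1 N, g z (N - 1 + k) * g u (N - 1 + k) =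
      ∑ k ∈ Finset.range (N - 1), g z (N + k) * g u (N + k) := by
    rw [Finset.sum_Ico_eq_sum_range]
    exact Finset.sum_congr rfl fun k _ => by rw [show N - 1 + (1 + k) = N + k by omega]
  rw [hsum, Finset.sum_range_add, Finset.range_eq_Ico, Finset.sum_eq_sum_Ico_succ_bot hN,
    Finset.sum_congr rfl hterm, Finset.sum_add_distrib, hshift, h0, h0]
  ring

/-- The polynomial `w^(N-1) Z` in `w = e^{jω}`. -/
def symbolPoly (N : ℕ) (z : Fin (2 * N - 1) → ℝ) : ℂ[X] :=
  monomial (N - 1) (toC N z 0) + ∑ k ∈ Finset.Ico 1 N,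
    (monomial (N - 1 - k) (toC N z k) + monomial (N - 1 + k) (conj (toC N z k)))

lemma natDegree_symbolPoly_le (N : ℕ) (z : Fin (2 * N - 1) → ℝ) :
    (symbolPoly N z).natDegree ≤ 2 * (N - 1) := by
  refine natDegree_add_le_of_degree_le (natDegree_monomial_le _ |>.trans (by omega))
    (natDegree_sum_le_of_forall_le _ _ fun k hk => ?_)
  rw [Finset.mem_Ico] at hk
  exact natDegree_add_le_of_degree_le (natDegree_monomial_le _ |>.trans (by omega))
    (natDegree_monomial_le _ |>.trans (by omega))

lemma eval_symbolPoly_exp (N : ℕ) (z : Fin (2 * N - 1) → ℝ) (ω : ℝ) :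
    (symbolPoly N z).eval (cexp (ω * I)) = cexp (ω * I) ^ (N - 1) * trigPoly N z ω := by
  have hpow : ∀ m : ℕ, cexp (ω * I) ^ m = cexp (m * ω * I) := fun m => by
    rw [← Complex.exp_nat_mul]; ring_nf
  have hterm : ∀ k ∈ Finset.Ico 1 N,
      eval (cexp (ω * I)) (monomial (N - 1 - k) (toC N z k) +
        monomial (N - 1 + k) (conj (toC N z k))) =
      cexp (ω * I) ^ (N - 1) * ((2 * (toC N z k * cexp (-I * ω * k)).re : ℝ) : ℂ) := by
    intro k hk
    rw [Finset.mem_Ico] at hk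
    rw [← Complex.add_conj, eval_add, eval_monomial, eval_monomial, hpow, hpow, hpow, map_mul,
      ← Complex.exp_conj, Nat.cast_sub (by omega), Nat.cast_add, mul_add,
      mul_left_comm _ (toC N z k), mul_left_comm _ (conj (toC N z k)), ← Complex.exp_add,
      ← Complex.exp_add]
    congr 3
    · ring
    · simp only [map_mul, map_neg, Complex.conj_I, Complex.conj_ofReal, map_natCast]
      ring
  rw [symbolPoly, eval_add, eval_finsetSum, Finset.sum_congr rfl hterm, eval_monomial,
    ← ofReal_re_toC_zero N z, trigPoly, ← Finset.mul_sum]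
  push_cast
  rw [← Finset.mul_sum]
  ring

lemma coeffPairing_toeplitzDiag_symbolPoly (N : ℕ) (hN : 1 ≤ N) (z u : Fin (2 * N - 1) → ℝ) :
    coeffPairing (toeplitzDiag N u) (symbolPoly N z) = ((2 * ∑ i, z i * u i : ℝ) : ℂ) := by
  have hterm : ∀ k ∈ Finset.Ico 1 N,
      coeffPairing (toeplitzDiag N u) (monomial (N - 1 - k) (toC N z k) +
        monomial (N - 1 + k) (conj (toC N z k))) =
      ((2 * (toC N z k * conj (toC N u k)).re : ℝ) : ℂ) := by
    intro k hk
    rw [Finset.mem_Ico] at hk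
    rw [map_add, coeffPairing_monomial, coeffPairing_monomial, ← Complex.add_conj, toeplitzDiag,
      toeplitzDiag, if_pos (by omega), if_neg (by omega), if_neg (by omega),
      show N - 1 - (N - 1 - k) = k by omega, show N - 1 + k - (N - 1) = k by omega,
      map_mul, Complex.conj_conj]
    ring
  rw [symbolPoly, map_add, map_sum, Finset.sum_congr rfl hterm, coeffPairing_monomial,
    toeplitzDiag, if_neg (lt_irrefl _), if_pos rfl, sum_mul_eq_toC N hN, ← ofReal_re_toC_zero N z,
    ← ofReal_re_toC_zero N u]
  push_cast [ofReal_re]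
  rw [← Finset.mul_sum]
  ring

lemma exists_mem_Ico_exp_mul_I_eq {w : ℂ} (hw : ‖w‖ = 1) :
    ∃ ω ∈ Ico 0 (2 * π), cexp (ω * I) = w := by
  have h := Complex.norm_mul_exp_arg_mul_I w
  rw [hw, ofReal_one, one_mul] at h
  rcases le_or_gt 0 (arg w) with h0 | h0
  · exact ⟨arg w, ⟨h0, (arg_le_pi w).trans_lt (by linarith [pi_pos])⟩, h⟩
  · refine ⟨arg w + 2 * π, ⟨by linarith [neg_pi_lt_arg w], by linarith⟩, ?_⟩
    rw [ofReal_add, add_mul, Complex.exp_add, h, ofReal_mul, ofReal_ofNat,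
      Complex.exp_two_pi_mul_I, mul_one]

lemma sum_mul_nonneg_of_trigPoly_nonneg (N : ℕ) (hN : 1 ≤ N) (z : Fin (2 * N - 1) → ℝ)
    (hZ : ∀ ω ∈ Ico 0 (2 * π), 0 ≤ trigPoly N z ω) (u : Fin (2 * N - 1) → ℝ)
    (hu : (Tmat N u).PosSemidef) : 0 ≤ ∑ i, z i * u i := by
  obtain ⟨n, rfl⟩ : ∃ n, N = n + 1 := ⟨N - 1, by omega⟩
  have hP : NonnegOnCircle n (symbolPoly (n + 1) z) := by
    intro w hw
    obtain ⟨ω, hω, rfl⟩ := exists_mem_Ico_exp_mul_I_eq hw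
    rw [eval_symbolPoly_exp, Nat.add_sub_cancel,
      mul_div_cancel_left₀ _ (pow_ne_zero _ (Complex.exp_ne_zero _))]
    exact zero_le_real.mpr (hZ ω hω)
  obtain ⟨p, hp, hPp⟩ := hP.exists_eq_mul_conjReflect (natDegree_symbolPoly_le (n + 1) z)
  have hquad := hu.dotProduct_mulVec_nonneg (fun i => p.coeff i)
  rw [dotProduct_mulVec_eq_coeffPairing (fun i j => by rw [Tmat_apply, Nat.add_sub_cancel]) hp,
    mul_comm, ← hPp, coeffPairing_toeplitzDiag_symbolPoly _ hN, zero_le_real] at hquad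
  linarith

def circleVec (N : ℕ) (ω : ℝ) : Fin (2 * N - 1) → ℝ := fun l =>
  if (l : ℕ) = 0 then 1 / 2
  else if (l : ℕ) < N then Real.cos (ω * l) else Real.sin (ω * ((l : ℕ) - (N - 1) : ℕ))

lemma toC_circleVec_zero (N : ℕ) (hN : 1 ≤ N) (ω : ℝ) : toC N (circleVec N ω) 0 = 1 / 2 := by
  simp [toC, circleVec, show 0 < 2 * N - 1 by omega]

lemma toC_circleVec {N k : ℕ} (hk0 : k ≠ 0) (hk : k < N) (ω : ℝ) :
    toC N (circleVec N ω) k = cexp (ω * k * I) := by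
  simp only [toC, circleVec, hk0, hk, ↓reduceIte, ↓reduceDIte, show k < 2 * N - 1 by omega,
    show N - 1 + k < 2 * N - 1 by omega, show ¬N - 1 + k < N by omega, Nat.add_eq_zero_iff,
    and_false, add_tsub_cancel_left, ofReal_cos, ofReal_sin, ofReal_mul, ofReal_natCast, exp_mul_I]
  ring

lemma Tmat_circleVec (N : ℕ) (ω : ℝ) :
    Tmat N (circleVec N ω) = vecMulVec (star fun j : Fin N => cexp (ω * (j : ℕ) * I))
      (fun j : Fin N => cexp (ω * (j : ℕ) * I)) := by
  have hv : ∀ a b : ℕ,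
      conj (cexp (ω * a * I)) * cexp (ω * b * I) = cexp (ω * ((b : ℂ) - a) * I) := by
    intro a b
    rw [← Complex.exp_conj, ← Complex.exp_add]
    simp only [map_mul, conj_ofReal, conj_I, map_natCast]
    ring_nf
  ext i j
  have hi := i.isLt
  rw [Tmat_apply, toeplitzDiag, vecMulVec_apply, Pi.star_apply, RCLike.star_def, hv]
  split_ifs with h1 h2
  · rw [show N - 1 - (N - 1 - i + j) = i - j by omega, toC_circleVec (by omega) (by omega),
      ← Complex.exp_conj, Nat.cast_sub (by omega)]
    simp only [map_mul, map_sub, conj_ofReal, conj_I, map_natCast]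
    ring_nf
  · rw [show (j : ℕ) = i by omega, sub_self, mul_zero, zero_mul, Complex.exp_zero,
      toC_circleVec_zero N (by omega)]
    norm_num
  · rw [show N - 1 - i + j - (N - 1) = j - i by omega, toC_circleVec (by omega) (by omega),
      Nat.cast_sub (by omega)]

lemma trigPoly_nonneg_of_sum_mul_nonneg (N : ℕ) (hN : 1 ≤ N) (z : Fin (2 * N - 1) → ℝ)
    (h : ∀ u : Fin (2 * N - 1) → ℝ, (Tmat N u).PosSemidef → 0 ≤ ∑ i, z i * u i) (ω : ℝ) :
    0 ≤ trigPoly N z ω := by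
  have hpsd : (Tmat N (circleVec N ω)).PosSemidef := by
    rw [Tmat_circleVec]
    simpa using posSemidef_vecMulVec_self_star (star fun j : Fin N => cexp (ω * (j : ℕ) * I))
  have hterm : ∀ k ∈ Finset.Ico 1 N, (toC N z k * conj (toC N (circleVec N ω) k)).re =
      (toC N z k * cexp (-I * ω * k)).re := by
    intro k hk
    rw [Finset.mem_Ico] at hk
    rw [toC_circleVec (by omega) hk.2, ← Complex.exp_conj]
    simp only [map_mul, conj_ofReal, conj_I, map_natCast]
    ring_nf
  have hsum := h _ hpsd
  rw [sum_mul_eq_toC N hN, Finset.sum_congr rfl hterm, toC_circleVec_zero N hN,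
    show (1 / 2 : ℂ).re = 1 / 2 by norm_num] at hsum
  rw [trigPoly]
  linarith

/-- `z ∈ C*` iff `Z(ω) ≥ 0` for all `ω ∈ [0, 2π)`. -/
theorem stmt5 (N : ℕ) (hN : 1 ≤ N) (z : Fin (2*N-1) → ℝ) :
    (∀ u : Fin (2*N-1) → ℝ, (Tmat N u).PosSemidef → 0 ≤ ∑ i, z i * u i) ↔
      (∀ ω ∈ Set.Ico (0:ℝ) (2*π), 0 ≤ trigPoly N z ω) :=
  ⟨fun h ω _ => trigPoly_nonneg_of_sum_mul_nonneg N hN z h ω,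
    fun hZ u hu => sum_mul_nonneg_of_trigPoly_nonneg N hN z hZ u hu⟩
end
end

section
/- If z ∈ ℝ^(2N-1) is a finite autocorrelation sequence, i.e., there exists q ∈ ℂ^N with (z_ℂ)_k = Σ_{n=0}^{N-1-k} conj(q_n) q_{n+k} for k = 0,...,N-1, then for every u ∈ ℝ^(2N-1) with T(u) positive semidefinite one has zᵀ u ≥ 0. In fact zᵀ u = (1/2) qᵀ T(u) conj(q). -/
open Complex Matrix ComplexOrder

noncomputable section

/-!
Reading `T(u)` diagonal by diagonal, with first row `r` and `c = z_ℂ` the autocorrelation of `q`,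
`qᵀ T(u) q̄ = r₀ c̄₀ + Σ_{k ≥ 1} (r_k c̄_k + r̄_k c_k)`: the `k`-th superdiagonal pairs with `c̄_k`
and the `k`-th subdiagonal with `c_k`. Each summand with `k ≥ 1` is `2 Re (r_k c̄_k)`, i.e. twice
`z_k u_k + z_{N-1+k} u_{N-1+k}`, and the factor `2` in `r₀ = 2u₀` makes the diagonal term `2 z₀ u₀`.
So `qᵀ T(u) q̄ = 2 zᵀu`, and `qᵀ T(u) q̄ = (q̄)ᴴ T(u) q̄ ≥ 0` since `T(u)` is positive semidefinite.
-/

open Finset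

section Toeplitz

variable {N : ℕ}

def hermToeplitz (r : ℕ → ℂ) : Matrix (Fin N) (Fin N) ℂ :=
  fun n m => if (n : ℕ) ≤ m then r (m - n) else star (r (n - m))

def autocorr (q : Fin N → ℂ) (k : ℕ) : ℂ :=
  ∑ n : Fin N, ∑ m : Fin N, if (m : ℕ) = n + k then star (q n) * q m else 0

lemma Fin.sum_ite_val_eq_add {M : Type*} [AddCommMonoid M] (f : ℕ → M) (n m : Fin N) :
    ∑ k : Fin N, (if (m : ℕ) = n + k then f k else 0) = if (n : ℕ) ≤ m then f (m - n) else 0 := by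
  split_ifs with h
  · rw [sum_eq_single ⟨m - n, by omega⟩
      (fun k _ hk => if_neg fun h' => hk (by ext; simp; omega)) (by simp)]
    simp only [if_pos (by omega : (m : ℕ) = n + (m - n))]
  · exact sum_eq_zero fun k _ => if_neg (by omega)

-- The main diagonal `k = 0` is produced by the first summand only.
lemma hermToeplitz_apply_eq_sum (r : ℕ → ℂ) (n m : Fin N) :
    hermToeplitz r n m = ∑ k : Fin N, ((if (m : ℕ) = n + k then r k else 0) +
      if (n : ℕ) = m + k then (if (k : ℕ) = 0 then 0 else star (r k)) else 0) := by
  rw [sum_add_distrib, Fin.sum_ite_val_eq_add,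
    Fin.sum_ite_val_eq_add (fun k => if k = 0 then 0 else star (r k)), hermToeplitz]
  split_ifs <;> first | omega | simp

lemma star_autocorr (q : Fin N → ℂ) (k : ℕ) :
    star (autocorr q k) =
      ∑ n : Fin N, ∑ m : Fin N, if (m : ℕ) = n + k then q n * star (q m) else 0 := by
  simp only [autocorr, star_sum]
  refine sum_congr rfl fun n _ => sum_congr rfl fun m _ => ?_
  split_ifs <;> simp [mul_comm]

lemma autocorr_eq_sum_swap (q : Fin N → ℂ) (k : ℕ) :
    autocorr q k =
      ∑ n : Fin N, ∑ m : Fin N, if (n : ℕ) = m + k then q n * star (q m) else 0 := by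
  rw [autocorr, sum_comm]
  refine sum_congr rfl fun n _ => sum_congr rfl fun m _ => ?_
  split_ifs <;> simp [mul_comm]

theorem sum_mul_hermToeplitz_mul_star (r : ℕ → ℂ) (q : Fin N → ℂ) :
    ∑ n, ∑ m, q n * hermToeplitz r n m * star (q m) =
      ∑ k : Fin N, (r k * star (autocorr q k) +
        (if (k : ℕ) = 0 then 0 else star (r k)) * autocorr q k) := by
  simp_rw [star_autocorr, autocorr_eq_sum_swap, mul_sum, hermToeplitz_apply_eq_sum,
    mul_sum, sum_mul, ← sum_add_distrib]
  conv_rhs => rw [sum_comm]; enter [2, n]; rw [sum_comm]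
  refine sum_congr rfl fun n _ => sum_congr rfl fun m _ => sum_congr rfl fun k _ => ?_
  split_ifs <;> ring

end Toeplitz

def zeroExtend {L : ℕ} (u : Fin L → ℝ) (k : ℕ) : ℝ := if h : k < L then u ⟨k, h⟩ else 0

lemma sum_range_zeroExtend_mul {L : ℕ} (z u : Fin L → ℝ) :
    ∑ i ∈ range L, zeroExtend z i * zeroExtend u i = ∑ i, z i * u i := by
  rw [← Fin.sum_univ_eq_sum_range]
  simp [zeroExtend]

lemma sum_range_add_ite_shift {M : Type*} [AddCommMonoid M] (p : ℕ → M) (N : ℕ) :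
    ∑ k ∈ range N, (p k + if k = 0 then 0 else p (N - 1 + k)) = ∑ i ∈ range (2 * N - 1), p i := by
  rcases N with _ | N
  · simp
  have hshift (k : ℕ) : N + 1 - 1 + (k + 1) = N + 1 + k := by omega
  rw [sum_range_succ', show 2 * (N + 1) - 1 = N + 1 + N by omega, sum_range_add,
    sum_range_succ' p, sum_add_distrib]
  simp only [Nat.add_one_ne_zero, ↓reduceIte, add_zero, hshift]
  abel

lemma toC_re (N : ℕ) (z : Fin (2*N-1) → ℝ) (k : ℕ) : (toC N z k).re = zeroExtend z k := by
  unfold toC zeroExtend; split_ifs <;> subst_vars <;> simp_all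

lemma toC_im (N : ℕ) (z : Fin (2*N-1) → ℝ) (k : ℕ) :
    (toC N z k).im = if k = 0 then 0 else zeroExtend z (N - 1 + k) := by
  unfold toC zeroExtend; split_ifs <;> simp_all

def toeplitzSymbol (N : ℕ) (u : Fin (2*N-1) → ℝ) (k : ℕ) : ℂ :=
  if k = 0 then 2 * toC N u 0 else toC N u k

lemma Tmat_eq_hermToeplitz (N : ℕ) (u : Fin (2*N-1) → ℝ) :
    Tmat N u = hermToeplitz (toeplitzSymbol N u) := by
  ext n m
  simp only [Tmat, hermToeplitz, toeplitzSymbol, toC]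
  split_ifs <;> simp_all

lemma Complex.mul_star_add_star_mul (a c : ℂ) :
    a * star c + star a * c = 2 * ((a.re * c.re + a.im * c.im : ℝ) : ℂ) := by
  apply Complex.ext <;> simp <;> ring

lemma toeplitzSymbol_mul_star_add (N : ℕ) (u z : Fin (2*N-1) → ℝ) (k : ℕ) :
    toeplitzSymbol N u k * star (toC N z k) +
        (if k = 0 then 0 else star (toeplitzSymbol N u k)) * toC N z k =
      2 * (((toC N z k).re * (toC N u k).re + (toC N z k).im * (toC N u k).im : ℝ) : ℂ) := by
  rcases eq_or_ne k 0 with rfl | hk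
  · apply Complex.ext <;> simp [toeplitzSymbol, toC_im]
    ring
  · rw [toeplitzSymbol, if_neg hk, if_neg hk, Complex.mul_star_add_star_mul]
    ring_nf

lemma sum_toC_re_mul_add_im_mul (N : ℕ) (z u : Fin (2*N-1) → ℝ) :
    ∑ k : Fin N, ((toC N z k).re * (toC N u k).re + (toC N z k).im * (toC N u k).im) =
      ∑ i, z i * u i := by
  rw [Fin.sum_univ_eq_sum_range
      (fun k => (toC N z k).re * (toC N u k).re + (toC N z k).im * (toC N u k).im),
    ← sum_range_zeroExtend_mul, ← sum_range_add_ite_shift]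
  refine sum_congr rfl fun k _ => ?_
  simp only [toC_re, toC_im]
  split_ifs <;> simp

theorem stmt6_general (N : ℕ) (z : Fin (2*N-1) → ℝ) (q : Fin N → ℂ)
    (hz : ∀ k : Fin N,
      toC N z k = ∑ n : Fin N, ∑ m : Fin N,
        if (m : ℕ) = (n : ℕ) + (k : ℕ) then star (q n) * q m else 0) :
    ∀ u : Fin (2*N-1) → ℝ, (Tmat N u).PosSemidef →
      0 ≤ ∑ i, z i * u i ∧
      ((∑ i, z i * u i : ℝ) : ℂ) =
        (1/2) * ∑ n : Fin N, ∑ m : Fin N, q n * Tmat N u n m * star (q m) := by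
  intro u hU
  have hz' : ∀ k : Fin N, autocorr q k = toC N z k := fun k => (hz k).symm
  have hquad : ∑ n : Fin N, ∑ m : Fin N, q n * Tmat N u n m * star (q m) =
      2 * ((∑ i, z i * u i : ℝ) : ℂ) := by
    simp_rw [Tmat_eq_hermToeplitz, sum_mul_hermToeplitz_mul_star, hz', toeplitzSymbol_mul_star_add,
      ← mul_sum, ← ofReal_sum, sum_toC_re_mul_add_im_mul]
  have hnonneg : 0 ≤ ∑ n : Fin N, ∑ m : Fin N, q n * Tmat N u n m * star (q m) := by
    simpa [dotProduct, mulVec, mul_sum, mul_assoc] using hU.dotProduct_mulVec_nonneg (star q)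
  rw [hquad] at hnonneg
  have hnonneg' : (0 : ℝ) ≤ 2 * ∑ i, z i * u i := by exact_mod_cast hnonneg
  exact ⟨nonneg_of_mul_nonneg_right hnonneg' two_pos, by rw [hquad]; ring⟩

/-- a finite autocorrelation sequence is in `C*`, with
`zᵀu = (1/2) qᵀ T(u) q̄`. -/
theorem stmt6 (N : ℕ) (hN : 1 ≤ N) (z : Fin (2*N-1) → ℝ) (q : Fin N → ℂ)
    (hz : ∀ k : Fin N,
      toC N z k = ∑ n : Fin N, ∑ m : Fin N,
        if (m : ℕ) = (n : ℕ) + (k : ℕ) then star (q n) * q m else 0) :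
    ∀ u : Fin (2*N-1) → ℝ, (Tmat N u).PosSemidef →
      0 ≤ ∑ i, z i * u i ∧
      ((∑ i, z i * u i : ℝ) : ℂ) =
        (1/2) * ∑ n : Fin N, ∑ m : Fin N, q n * Tmat N u n m * star (q m) :=
  stmt6_general N z q hz
end
end

section
/- Let f(v, x, u) = ‖x − y‖₂² + τ(v + wᵀu) with τ > 0. Then f is bounded below on the cone K = {(v,x,u) : [[T(u),x],[xᴴ,v]] ⪰ 0} if and only if w ∈ C*, i.e., wᵀu ≥ 0 for all u with T(u) ⪰ 0. Moreover, when w ∈ C*, f(μ) ≥ 0 for all μ ∈ K. -/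
open Complex Matrix ComplexOrder

noncomputable section

/-- The block matrix `[[T(u), x], [xᴴ, v]]`. -/
def Kmat (N : ℕ) (v : ℝ) (x : Fin N → ℂ) (u : Fin (2*N-1) → ℝ) :
    Matrix (Fin N ⊕ Unit) (Fin N ⊕ Unit) ℂ :=
  Matrix.fromBlocks (Tmat N u) (fun i _ => x i) (fun _ j => star (x j)) (fun _ _ => (v : ℂ))

/-- The cone `K = {(v,x,u) : [[T(u),x],[xᴴ,v]] ⪰ 0}`. -/
def Kcone (N : ℕ) : Set (ℝ × (Fin N → ℂ) × (Fin (2*N-1) → ℝ)) :=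
  {p | (Kmat N p.1 p.2.1 p.2.2).PosSemidef}

/-- The objective `f(v,x,u) = ‖x-y‖₂² + τ(v + wᵀu)`. -/
def fobj (N : ℕ) (y : Fin N → ℂ) (τ : ℝ) (w : Fin (2*N-1) → ℝ)
    (p : ℝ × (Fin N → ℂ) × (Fin (2*N-1) → ℝ)) : ℝ :=
  (∑ i, Complex.normSq (p.2.1 i - y i)) + τ * (p.1 + ∑ i, w i * p.2.2 i)


/-! Since `T(u)` and `v` are principal blocks of a positive semidefinite matrix, a point of `K`
has `T(u) ⪰ 0` and `v ≥ 0`, so `w ∈ C*` makes both terms of `f` nonnegative. Conversely, if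
`T(u) ⪰ 0` but `wᵀu < 0`, the ray `t ↦ (0, 0, t u)`, `t ≥ 0`, lies in `K` and `f` decreases
linearly along it. -/

namespace Matrix

theorem PosSemidef.fromBlocks_zero_zero {m n R : Type*} [Fintype m] [Fintype n]
    [Ring R] [PartialOrder R] [StarRing R] [IsOrderedRing R]
    {A : Matrix m m R} {D : Matrix n n R} (hA : A.PosSemidef) (hD : D.PosSemidef) :
    (fromBlocks A 0 0 D).PosSemidef := by
  rw [posSemidef_iff_dotProduct_mulVec] at hA hD ⊢
  refine ⟨hA.1.fromBlocks (by simp) hD.1, fun x => ?_⟩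
  rw [← Sum.elim_comp_inl_inr x, fromBlocks_mulVec, dotProduct_block]
  simp only [Sum.elim_comp_inl, Sum.elim_comp_inr, zero_mulVec, add_zero, zero_add]
  exact add_nonneg (hA.2 (x ∘ Sum.inl)) (hD.2 (x ∘ Sum.inr))

end Matrix

lemma tmat_smul (N : ℕ) (t : ℝ) (u : Fin (2*N-1) → ℝ) :
    Tmat N (t • u) = (t : ℂ) • Tmat N u := by
  ext n m
  simp only [Tmat, Pi.smul_apply, smul_eq_mul, Matrix.smul_apply]
  split_ifs <;> simp <;> ring

lemma posSemidef_tmat_of_kmat {N : ℕ} {v : ℝ} {x : Fin N → ℂ} {u : Fin (2*N-1) → ℝ}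
    (h : (Kmat N v x u).PosSemidef) : (Tmat N u).PosSemidef :=
  h.submatrix Sum.inl

lemma nonneg_of_posSemidef_kmat {N : ℕ} {v : ℝ} {x : Fin N → ℂ} {u : Fin (2*N-1) → ℝ}
    (h : (Kmat N v x u).PosSemidef) : 0 ≤ v :=
  Complex.zero_le_real.mp (h.diag_nonneg (i := Sum.inr ()))

lemma posSemidef_kmat_zero_zero {N : ℕ} {u : Fin (2*N-1) → ℝ} (h : (Tmat N u).PosSemidef) :
    (Kmat N 0 0 u).PosSemidef := by
  convert h.fromBlocks_zero_zero (PosSemidef.zero (n := Unit)) using 1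
  ext (i | i) (j | j) <;> simp [Kmat, fromBlocks]

lemma zero_zero_smul_mem_kcone {N : ℕ} {u : Fin (2*N-1) → ℝ} (hu : (Tmat N u).PosSemidef)
    {t : ℝ} (ht : 0 ≤ t) : (0, 0, t • u) ∈ Kcone N := by
  refine posSemidef_kmat_zero_zero ?_
  rw [tmat_smul]
  exact hu.smul (Complex.zero_le_real.mpr ht)

lemma fobj_zero_zero_smul (N : ℕ) (y : Fin N → ℂ) (τ : ℝ) (w u : Fin (2*N-1) → ℝ) (t : ℝ) :
    fobj N y τ w (0, 0, t • u) = ∑ i, normSq (y i) + t * (τ * ∑ i, w i * u i) := by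
  simp only [fobj, Pi.smul_apply, Pi.zero_apply, smul_eq_mul, zero_sub, normSq_neg, zero_add,
    Finset.mul_sum]
  congr 1
  exact Finset.sum_congr rfl fun i _ => by ring

lemma fobj_nonneg {N : ℕ} {y : Fin N → ℂ} {τ : ℝ} (hτ : 0 ≤ τ) {w : Fin (2*N-1) → ℝ}
    (hw : ∀ u : Fin (2*N-1) → ℝ, (Tmat N u).PosSemidef → 0 ≤ ∑ i, w i * u i)
    {p : ℝ × (Fin N → ℂ) × (Fin (2*N-1) → ℝ)} (hp : p ∈ Kcone N) : 0 ≤ fobj N y τ w p :=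
  add_nonneg (Finset.sum_nonneg fun _ _ => normSq_nonneg _) <|
    mul_nonneg hτ (add_nonneg (nonneg_of_posSemidef_kmat hp) (hw _ (posSemidef_tmat_of_kmat hp)))

lemma nonneg_of_forall_le_add_mul {B c a : ℝ} (h : ∀ t : ℝ, 0 ≤ t → B ≤ c + t * a) : 0 ≤ a := by
  by_contra! ha
  have hB := h ((|c - B| + 1) / -a) (div_nonneg (by positivity) (neg_nonneg.mpr ha.le))
  have hray : (|c - B| + 1) / -a * a = -(|c - B| + 1) := by
    rw [div_neg, neg_mul, div_mul_cancel₀ _ ha.ne]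
  linarith [le_abs_self (c - B)]

theorem stmt10_general (N : ℕ) (y : Fin N → ℂ) (τ : ℝ) (hτ : 0 < τ)
    (w : Fin (2*N-1) → ℝ) :
    ((∃ B : ℝ, ∀ p ∈ Kcone N, B ≤ fobj N y τ w p) ↔
      (∀ u : Fin (2*N-1) → ℝ, (Tmat N u).PosSemidef → 0 ≤ ∑ i, w i * u i)) ∧
    ((∀ u : Fin (2*N-1) → ℝ, (Tmat N u).PosSemidef → 0 ≤ ∑ i, w i * u i) →
      ∀ p ∈ Kcone N, 0 ≤ fobj N y τ w p) := by
  refine ⟨⟨fun ⟨B, hB⟩ u hu => ?_, fun hw => ⟨0, fun p => fobj_nonneg hτ.le hw⟩⟩,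
    fun hw p => fobj_nonneg hτ.le hw⟩
  refine nonneg_of_mul_nonneg_right
    (nonneg_of_forall_le_add_mul (B := B) (c := ∑ i, normSq (y i)) fun t ht => ?_) hτ
  simpa only [fobj_zero_zero_smul] using hB _ (zero_zero_smul_mem_kcone hu ht)

/-- for τ > 0, f is bounded below on K iff w ∈ C*, and then f ≥ 0 on K. -/
theorem stmt10 (N : ℕ) (hN : 1 ≤ N) (y : Fin N → ℂ) (τ : ℝ) (hτ : 0 < τ)
    (w : Fin (2*N-1) → ℝ) :
    ((∃ B : ℝ, ∀ p ∈ Kcone N, B ≤ fobj N y τ w p) ↔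
      (∀ u : Fin (2*N-1) → ℝ, (Tmat N u).PosSemidef → 0 ≤ ∑ i, w i * u i)) ∧
    ((∀ u : Fin (2*N-1) → ℝ, (Tmat N u).PosSemidef → 0 ≤ ∑ i, w i * u i) →
      ∀ p ∈ Kcone N, 0 ≤ fobj N y τ w p) :=
  stmt10_general N y τ hτ w
end
end

section
/- If τ < 0, or if τ > 0 and w ∉ C*, then f(v,x,u) = ‖x − y‖₂² + τ(v + wᵀu) is unbounded below on K: there exists μ ∈ K with x-component zero such that f(αμ) → −∞ as α → ∞. -/
open Complex Matrix ComplexOrder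

noncomputable section

/-!
A point `(v, 0, u)` with `v ≥ 0` and `T(u) ⪰ 0` lies in `K`, its block matrix being block
diagonal, and along the ray through it `f` is affine in `α` with slope `τ (v + wᵀu)`. For `τ < 0`
take `(1, 0, 0)`; for `τ > 0` take `(0, 0, u)` with `T(u) ⪰ 0` and `wᵀu < 0`, which exists
because `w ∉ C*`.
-/

theorem Matrix.PosSemidef.fromBlocks_zero {m n : Type*} [Fintype m] [Fintype n]
    {A : Matrix m m ℂ} {D : Matrix n n ℂ} (hA : A.PosSemidef) (hD : D.PosSemidef) :
    (fromBlocks A 0 0 D).PosSemidef := by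
  refine .of_dotProduct_mulVec_nonneg (hA.1.fromBlocks (by simp) hD.1) fun x => ?_
  have hA' := hA.dotProduct_mulVec_nonneg (x ∘ Sum.inl)
  have hD' := hD.dotProduct_mulVec_nonneg (x ∘ Sum.inr)
  simp only [fromBlocks_mulVec, zero_mulVec, add_zero, zero_add, dotProduct,
    Fintype.sum_sum_type] at *
  exact add_nonneg hA' hD'

@[simp]
theorem Tmat_zero (N : ℕ) : Tmat N 0 = 0 := by
  ext n m
  simp [Tmat]

theorem Kmat_zero_eq_fromBlocks (N : ℕ) (v : ℝ) (u : Fin (2*N-1) → ℝ) :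
    Kmat N v 0 u = fromBlocks (Tmat N u) 0 0 (diagonal fun _ => (v : ℂ)) := by
  ext (i | i) (j | j) <;> simp [Kmat, fromBlocks]

theorem mk_zero_mem_Kcone {N : ℕ} {v : ℝ} {u : Fin (2*N-1) → ℝ} (hv : 0 ≤ v)
    (hu : (Tmat N u).PosSemidef) : (v, 0, u) ∈ Kcone N := by
  change (Kmat N v 0 u).PosSemidef
  rw [Kmat_zero_eq_fromBlocks]
  exact hu.fromBlocks_zero (.diagonal fun _ => by simpa using hv)

theorem fobj_smul_mk_zero (N : ℕ) (y : Fin N → ℂ) (τ : ℝ) (w : Fin (2*N-1) → ℝ) (v : ℝ)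
    (u : Fin (2*N-1) → ℝ) (α : ℝ) :
    fobj N y τ w (α • (v, 0, u)) = (∑ i, normSq (y i)) + τ * (v + ∑ i, w i * u i) * α := by
  simp only [fobj, Prod.smul_mk, smul_zero, Pi.zero_apply, zero_sub, normSq_neg, Pi.smul_apply,
    smul_eq_mul, mul_left_comm _ α, ← Finset.mul_sum]
  ring

theorem tendsto_fobj_smul_mk_zero_atBot {N : ℕ} (y : Fin N → ℂ) {τ : ℝ}
    {w : Fin (2*N-1) → ℝ} {v : ℝ} {u : Fin (2*N-1) → ℝ} (h : τ * (v + ∑ i, w i * u i) < 0) :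
    Filter.Tendsto (fun α : ℝ => fobj N y τ w (α • (v, 0, u))) Filter.atTop Filter.atBot := by
  simp only [fobj_smul_mk_zero]
  exact Filter.tendsto_atBot_add_const_left _ _ (Filter.tendsto_id.const_mul_atTop_of_neg h)

theorem stmt11_general (N : ℕ) (y : Fin N → ℂ) (τ : ℝ) (w : Fin (2*N-1) → ℝ)
    (h : τ < 0 ∨ (0 < τ ∧
      ¬ (∀ u : Fin (2*N-1) → ℝ, (Tmat N u).PosSemidef → 0 ≤ ∑ i, w i * u i))) :
    ∃ p ∈ Kcone N, p.2.1 = 0 ∧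
      Filter.Tendsto (fun α : ℝ => fobj N y τ w (α • p)) Filter.atTop Filter.atBot := by
  rcases h with hτ | ⟨hτ, hw⟩
  · refine ⟨(1, 0, 0), mk_zero_mem_Kcone zero_le_one (by simpa using .zero), rfl, ?_⟩
    exact tendsto_fobj_smul_mk_zero_atBot y (by simpa using hτ)
  · push Not at hw
    obtain ⟨u, hu, hwu⟩ := hw
    refine ⟨(0, 0, u), mk_zero_mem_Kcone le_rfl hu, rfl, ?_⟩
    exact tendsto_fobj_smul_mk_zero_atBot y (by simpa using mul_neg_of_pos_of_neg hτ hwu)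

/-- if τ < 0, or τ > 0 and w ∉ C*, then f is unbounded below on K along a ray
with vanishing x-component. -/
theorem stmt11 (N : ℕ) (hN : 1 ≤ N) (y : Fin N → ℂ) (τ : ℝ) (w : Fin (2*N-1) → ℝ)
    (h : τ < 0 ∨ (0 < τ ∧
      ¬ (∀ u : Fin (2*N-1) → ℝ, (Tmat N u).PosSemidef → 0 ≤ ∑ i, w i * u i))) :
    ∃ p ∈ Kcone N, p.2.1 = 0 ∧
      Filter.Tendsto (fun α : ℝ => fobj N y τ w (α • p)) Filter.atTop Filter.atBot :=
  stmt11_general N y τ w h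
end
end
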